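/- arXiv:0903.4459 — 3 statements merged into one kernel-verified Lean document; each statement's English description precedes it below -/
import Mathlib

section
/- Let I be a finite set with |I| = n ≥ 2. A function n ∈ ℤ[Par(I)] lies in the image of q_*p^* : ℤ[𝒫(I)] → ℤ[Par(I)] if and only if Σ_{P ∈ Par(I)} m(P)·n(P) = 0 for every m in the kernel of p_*q^* : ℤ[Par(I)] → ℤ[𝒫(I)]. -/
noncomputable section
open Classical

/-- A partition of a type `I`: a finite collection of nonempty pairwise disjoint
subsets covering `I`. -/
def IsPart {I : Type} (P : Finset (Finset I)) : Prop :=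
  (∀ S ∈ P, S ≠ ∅) ∧ ∀ a : I, ∃! S, S ∈ P ∧ a ∈ S

/-- `Par(I)`: the partitions of `I` into at least two nonempty blocks. -/
abbrev Pars (I : Type) [Fintype I] [DecidableEq I] : Type :=
  {P : Finset (Finset I) // IsPart P ∧ 2 ≤ P.card}

/-- `𝒫(I)`: the nonempty proper subsets of `I`. -/
abbrev Psets (I : Type) [Fintype I] [DecidableEq I] : Type :=
  {S : Finset I // S ≠ ∅ ∧ S ≠ Finset.univ}

/-- The map `q_* p^* : ℤ[𝒫(I)] → ℤ[Par(I)]`, `(q_* p^* k)(P) = ∑_{S ∈ P} k(S)`. -/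
def qp {I : Type} [Fintype I] [DecidableEq I] (k : Psets I → ℤ) : Pars I → ℤ :=
  fun P => ∑ S ∈ Finset.univ.filter (fun S : Psets I => S.1 ∈ P.1), k S

/-- The map `p_* q^* : ℤ[Par(I)] → ℤ[𝒫(I)]`, `(p_* q^* m)(S) = ∑_{P ∋ S} m(P)`. -/
def pq {I : Type} [Fintype I] [DecidableEq I] (m : Pars I → ℤ) : Psets I → ℤ :=
  fun S => ∑ P ∈ Finset.univ.filter (fun P : Pars I => S.1 ∈ P.1), m P

section Aux

variable {I : Type} [Fintype I] [DecidableEq I]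

lemma block_ne_univ {P : Finset (Finset I)} (hP : IsPart P) (h2 : 2 ≤ P.card)
    {B : Finset I} (hB : B ∈ P) : B ≠ Finset.univ := by
  intro h
  obtain ⟨C, hC, hne⟩ := Finset.exists_mem_ne (by omega : 1 < P.card) B
  obtain ⟨c, hc⟩ := Finset.nonempty_of_ne_empty (hP.1 _ hC)
  obtain ⟨S0, _, huniq⟩ := hP.2 c
  have h1 := huniq B ⟨hB, by simp [h]⟩
  have h2' := huniq C ⟨hC, hc⟩
  exact hne (h2'.trans h1.symm)

/-- Transfer a sum over the subtype filter to a sum over the blocks of `P`. -/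
lemma sum_filter_psets (P : Pars I) (f : Psets I → ℤ) (g : Finset I → ℤ)
    (hfg : ∀ S : Psets I, S.1 ∈ P.1 → f S = g S.1) :
    ∑ S ∈ Finset.univ.filter (fun S : Psets I => S.1 ∈ P.1), f S = ∑ B ∈ P.1, g B := by
  refine Finset.sum_bij (fun (S : Psets I) _ => S.1) ?_ ?_ ?_ ?_
  · intro S hS; simpa using (Finset.mem_filter.mp hS).2
  · intro S _ T _ h; exact Subtype.ext h
  · intro B hB
    exact ⟨⟨B, P.2.1.1 _ hB, block_ne_univ P.2.1 P.2.2 hB⟩, by simp [hB], rfl⟩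
  · intro S hS; exact hfg S (by simpa using (Finset.mem_filter.mp hS).2)

lemma count_mem {P : Finset (Finset I)} (hP : IsPart P) (a : I) :
    ∑ B ∈ P, (if a ∈ B then (1 : ℤ) else 0) = 1 := by
  obtain ⟨B0, ⟨hB0, haB0⟩, huniq⟩ := hP.2 a
  rw [Finset.sum_eq_single_of_mem B0 hB0]
  · simp [haB0]
  · intro B hB hne
    rw [if_neg]
    intro haB
    exact hne (huniq B ⟨hB, haB⟩)

lemma count_not_mem (P : Pars I) (a : I) :
    ∑ B ∈ P.1, (if a ∉ B then (1 : ℤ) else 0) = (P.1.card : ℤ) - 1 := by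
  have h1 : ∀ B ∈ P.1, (if a ∉ B then (1 : ℤ) else 0) = 1 - (if a ∈ B then (1 : ℤ) else 0) := by
    intro B _; by_cases h : a ∈ B <;> simp [h]
  rw [Finset.sum_congr rfl h1, Finset.sum_sub_distrib, count_mem P.2.1, Finset.sum_const]
  simp [mul_comm]

/-- The partition of `I` into singletons. -/
def sPart (I : Type) [Fintype I] [DecidableEq I] : Finset (Finset I) :=
  Finset.univ.image fun a => ({a} : Finset I)

lemma isPart_sPart : IsPart (sPart I) := by
  constructor
  · intro S hS
    simp only [sPart, Finset.mem_image] at hS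
    obtain ⟨a, _, rfl⟩ := hS
    simp
  · intro a
    refine ⟨{a}, ⟨by simp [sPart], by simp⟩, ?_⟩
    rintro S ⟨hS, haS⟩
    simp only [sPart, Finset.mem_image] at hS
    obtain ⟨b, _, rfl⟩ := hS
    simp only [Finset.mem_singleton] at haS
    subst haS; rfl

lemma card_sPart : (sPart I).card = Fintype.card I := by
  rw [sPart, Finset.card_image_of_injective _ (fun a b h => by simpa using h)]
  simp

/-- The partition `{S} ∪ {singletons of Sᶜ}`. -/
def bPart (S : Finset I) : Finset (Finset I) :=
  insert S (Sᶜ.image fun a => ({a} : Finset I))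

lemma mem_bPart {S T : Finset I} : T ∈ bPart S ↔ T = S ∨ ∃ a ∉ S, T = {a} := by
  simp only [bPart, Finset.mem_insert, Finset.mem_image, Finset.mem_compl]
  constructor
  · rintro (rfl | ⟨a, ha, rfl⟩)
    · exact Or.inl rfl
    · exact Or.inr ⟨a, ha, rfl⟩
  · rintro (rfl | ⟨a, ha, rfl⟩)
    · exact Or.inl rfl
    · exact Or.inr ⟨a, ha, rfl⟩

lemma isPart_bPart {S : Finset I} (h1 : S ≠ ∅) : IsPart (bPart S) := by
  constructor
  · intro T hT
    rcases mem_bPart.mp hT with rfl | ⟨a, _, rfl⟩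
    · exact h1
    · simp
  · intro a
    by_cases ha : a ∈ S
    · refine ⟨S, ⟨mem_bPart.mpr (Or.inl rfl), ha⟩, ?_⟩
      rintro T ⟨hT, haT⟩
      rcases mem_bPart.mp hT with rfl | ⟨b, hb, rfl⟩
      · rfl
      · simp only [Finset.mem_singleton] at haT; subst haT; exact absurd ha hb
    · refine ⟨{a}, ⟨mem_bPart.mpr (Or.inr ⟨a, ha, rfl⟩), by simp⟩, ?_⟩
      rintro T ⟨hT, haT⟩
      rcases mem_bPart.mp hT with rfl | ⟨b, _, rfl⟩
      · exact absurd haT ha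
      · simp only [Finset.mem_singleton] at haT; subst haT; rfl

lemma two_le_card_bPart {S : Finset I} (h1 : S ≠ ∅) (h2 : S ≠ Finset.univ) :
    2 ≤ (bPart S).card := by
  obtain ⟨b, hb⟩ : ∃ b, b ∉ S := by
    by_contra h
    push_neg at h
    exact h2 (Finset.eq_univ_iff_forall.mpr h)
  have : 1 < (bPart S).card := by
    refine Finset.one_lt_card.mpr ⟨S, mem_bPart.mpr (Or.inl rfl),
      {b}, mem_bPart.mpr (Or.inr ⟨b, hb, rfl⟩), ?_⟩
    intro h
    rw [h] at hb
    simp at hb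
  omega

end Aux

/-- `n ∈ ℤ[Par(I)]` lies in the image of
`q_* p^* : ℤ[𝒫(I)] → ℤ[Par(I)]` if and only if `∑_P m(P) n(P) = 0` for every `m` in
the kernel of `p_* q^* : ℤ[Par(I)] → ℤ[𝒫(I)]`. -/
theorem mem_image_qp_iff_orthogonal_ker_pq (I : Type) [Fintype I] [DecidableEq I]
    (hI : 2 ≤ Fintype.card I) (n : Pars I → ℤ) :
    (∃ k : Psets I → ℤ, n = qp k) ↔
      ∀ m : Pars I → ℤ, pq m = 0 → ∑ P : Pars I, m P * n P = 0 := by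
  constructor
  · rintro ⟨k, rfl⟩ m hm
    calc ∑ P : Pars I, m P * qp k P
        = ∑ P : Pars I, ∑ S : Psets I, if S.1 ∈ P.1 then m P * k S else 0 := by
          simp only [qp, Finset.mul_sum, Finset.sum_filter, mul_ite, mul_zero]
      _ = ∑ S : Psets I, ∑ P : Pars I, if S.1 ∈ P.1 then m P * k S else 0 :=
          Finset.sum_comm
      _ = ∑ S : Psets I, pq m S * k S := by
          refine Finset.sum_congr rfl fun S _ => ?_
          rw [pq, Finset.sum_filter, Finset.sum_mul]
          refine Finset.sum_congr rfl fun P _ => ?_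
          by_cases h : S.1 ∈ P.1 <;> simp [h]
      _ = 0 := by
          rw [hm]; simp
  · intro h
    have hpos : 0 < Fintype.card I := by omega
    have : Nonempty I := Fintype.card_pos_iff.mp hpos
    let a0 : I := Classical.arbitrary I
    let Pσ : Pars I := ⟨sPart I, isPart_sPart, by rw [card_sPart]; exact hI⟩
    let PB : Psets I → Pars I :=
      fun S => ⟨bPart S.1, isPart_bPart S.2.1, two_le_card_bPart S.2.1 S.2.2⟩
    refine ⟨fun S => n (PB S) - (if a0 ∈ S.1 then 0 else n Pσ), ?_⟩
    funext P
    set c : ℤ := (P.1.card : ℤ) - 1 with hc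
    set m : Pars I → ℤ := fun Q =>
      (if Q = P then 1 else 0)
        - (∑ S ∈ Finset.univ.filter (fun S : Psets I => S.1 ∈ P.1),
            if Q = PB S then (1 : ℤ) else 0)
        + c * (if Q = Pσ then 1 else 0) with hmdef
    have hm : pq m = 0 := by
      funext T
      show (∑ Q ∈ Finset.univ.filter (fun Q : Pars I => T.1 ∈ Q.1), m Q) = 0
      simp only [hmdef]
      rw [Finset.sum_add_distrib, Finset.sum_sub_distrib, ← Finset.mul_sum]
      rw [Finset.sum_ite_eq' _ P, Finset.sum_ite_eq' _ Pσ, Finset.sum_comm]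
      have hinner : ∀ S : Psets I,
          (∑ Q ∈ Finset.univ.filter (fun Q : Pars I => T.1 ∈ Q.1),
            if Q = PB S then (1 : ℤ) else 0) = if T.1 ∈ bPart S.1 then (1 : ℤ) else 0 := by
        intro S
        rw [Finset.sum_ite_eq' _ (PB S)]
        simp [PB]
      rw [Finset.sum_congr rfl fun S _ => hinner S]
      rw [sum_filter_psets P _ (fun B => if T.1 ∈ bPart B then (1 : ℤ) else 0)
        (fun S _ => rfl)]
      simp only [Finset.mem_filter, Finset.mem_univ, true_and]
      by_cases hsing : ∃ a, T.1 = {a}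
      · obtain ⟨a, ha⟩ := hsing
        have hmemb : ∀ B : Finset I, (T.1 ∈ bPart B) ↔ ({a} = B ∨ a ∉ B) := by
          intro B
          rw [ha, mem_bPart]
          constructor
          · rintro (h | ⟨b, hb, hab⟩)
            · exact Or.inl h
            · have : a = b := by simpa using hab
              exact Or.inr (this ▸ hb)
          · rintro (h | h)
            · exact Or.inl h
            · exact Or.inr ⟨a, h, rfl⟩
          
        have hsplit : ∀ B ∈ P.1,
            (if T.1 ∈ bPart B then (1 : ℤ) else 0)
              = (if {a} = B then (1 : ℤ) else 0) + (if a ∉ B then (1 : ℤ) else 0) := by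
          intro B _
          rw [if_congr (hmemb B) rfl rfl]
          by_cases h1 : {a} = B
          · have haB : a ∈ B := h1 ▸ (by simp)
            simp [h1, haB]
          · by_cases h2 : a ∉ B <;> simp [h1, h2]
        rw [Finset.sum_congr rfl hsplit, Finset.sum_add_distrib,
          Finset.sum_ite_eq _ ({a} : Finset I), count_not_mem P a]
        have hTσ : T.1 ∈ Pσ.1 := by
          show T.1 ∈ sPart I
          rw [ha]
          simp [sPart]
        have hTP : (T.1 ∈ P.1) ↔ ({a} ∈ P.1) := by rw [ha]
        rw [if_pos hTσ, if_congr hTP rfl rfl]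
        ring
      · have hmemb : ∀ B : Finset I, (T.1 ∈ bPart B) ↔ (T.1 = B) := by
          intro B
          rw [mem_bPart]
          constructor
          · rintro (h | ⟨b, _, hb⟩)
            · exact h
            · exact absurd ⟨b, hb⟩ hsing
          · exact Or.inl
        have hTσ : T.1 ∉ Pσ.1 := by
          show T.1 ∉ sPart I
          intro hT
          simp only [sPart, Finset.mem_image] at hT
          obtain ⟨b, _, hb⟩ := hT
          exact hsing ⟨b, hb.symm⟩
        rw [Finset.sum_congr rfl fun B _ => if_congr (hmemb B) rfl rfl,
          Finset.sum_ite_eq _ T.1, if_neg hTσ]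
        ring
    have key := h m hm
    simp only [hmdef] at key
    have e1 : ∑ Q : Pars I, (if Q = P then (1 : ℤ) else 0) * n Q = n P := by
      have step : ∀ Q : Pars I,
          (if Q = P then (1 : ℤ) else 0) * n Q = if Q = P then n Q else 0 := fun Q => by
        by_cases h : Q = P <;> simp [h]
      rw [Finset.sum_congr rfl fun Q _ => step Q, Finset.sum_ite_eq' Finset.univ P n]
      simp
    have e2 : ∑ Q : Pars I,
        (∑ S ∈ Finset.univ.filter (fun S : Psets I => S.1 ∈ P.1),
          if Q = PB S then (1 : ℤ) else 0) * n Q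
        = ∑ S ∈ Finset.univ.filter (fun S : Psets I => S.1 ∈ P.1), n (PB S) := by
      have step : ∀ Q : Pars I,
          (∑ S ∈ Finset.univ.filter (fun S : Psets I => S.1 ∈ P.1),
            if Q = PB S then (1 : ℤ) else 0) * n Q
          = ∑ S ∈ Finset.univ.filter (fun S : Psets I => S.1 ∈ P.1),
              if Q = PB S then n Q else 0 := by
        intro Q
        rw [Finset.sum_mul]
        exact Finset.sum_congr rfl fun S _ => by by_cases h : Q = PB S <;> simp [h]
      rw [Finset.sum_congr rfl fun Q _ => step Q, Finset.sum_comm]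
      refine Finset.sum_congr rfl fun S _ => ?_
      rw [Finset.sum_ite_eq' Finset.univ (PB S) n]
      simp
    have e3 : ∑ Q : Pars I, c * (if Q = Pσ then (1 : ℤ) else 0) * n Q = c * n Pσ := by
      have step : ∀ Q : Pars I,
          c * (if Q = Pσ then (1 : ℤ) else 0) * n Q
            = c * if Q = Pσ then n Q else 0 := fun Q => by
        by_cases h : Q = Pσ <;> simp [h]
      rw [Finset.sum_congr rfl fun Q _ => step Q, ← Finset.mul_sum,
        Finset.sum_ite_eq' Finset.univ Pσ n]
      simp
    simp only [sub_mul, add_mul] at key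
    rw [Finset.sum_add_distrib, Finset.sum_sub_distrib, e1, e2, e3] at key
    -- key : n P - ∑ S, n (PB S) + c * n Pσ = 0
    show n P = qp _ P
    rw [qp, Finset.sum_sub_distrib]
    have e4 : ∑ S ∈ Finset.univ.filter (fun S : Psets I => S.1 ∈ P.1),
        (if a0 ∈ S.1 then (0 : ℤ) else n Pσ) = c * n Pσ := by
      rw [sum_filter_psets P _ (fun B => if a0 ∈ B then (0 : ℤ) else n Pσ)
        (fun S _ => rfl)]
      have : ∀ B ∈ P.1, (if a0 ∈ B then (0 : ℤ) else n Pσ)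
          = (if a0 ∉ B then (1 : ℤ) else 0) * n Pσ := by
        intro B _
        by_cases h : a0 ∈ B <;> simp [h]
      rw [Finset.sum_congr rfl this, ← Finset.sum_mul, count_not_mem P a0, hc]
    rw [e4]
    linarith
end
end

section
/- Let I be a finite set with |I| = n ≥ 2. If n : Par(I) → ℤ and there exists a function k : 𝒫(I) → ℚ with n(P) = Σ_{S ∈ P} k(S) for every P ∈ Par(I), then there exists a function k̃ : 𝒫(I) → ℤ with n(P) = Σ_{S ∈ P} k̃(S) for every P ∈ Par(I); that is, the image of q_*p^* : ℤ[𝒫(I)] → ℤ[Par(I)] is a saturated subgroup of ℤ[Par(I)] relative to its rational span. -/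
noncomputable section
open Classical

section Aux
variable {I : Type} [Fintype I] [DecidableEq I]

lemma block_ne_empty (P : Pars I) {T : Finset I} (hT : T ∈ P.1) : T ≠ ∅ :=
  P.2.1.1 T hT

lemma block_ne_univ_s16 (P : Pars I) {T : Finset I} (hT : T ∈ P.1) : T ≠ Finset.univ := by
  obtain ⟨T', hT', hne⟩ : ∃ T' ∈ P.1, T' ≠ T := by
    by_contra hc
    push_neg at hc
    have hsub : P.1 ⊆ {T} := fun x hx => Finset.mem_singleton.mpr (hc x hx)
    have := Finset.card_le_card hsub
    simp at this
    have := P.2.2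
    omega
  obtain ⟨a, ha⟩ := Finset.nonempty_of_ne_empty (P.2.1.1 T' hT')
  intro h
  obtain ⟨S, -, hu⟩ := P.2.1.2 a
  have h1 := hu T ⟨hT, h ▸ Finset.mem_univ a⟩
  have h2 := hu T' ⟨hT', ha⟩
  exact hne (h2.trans h1.symm)

/-- extend a function on proper nonempty subsets by zero -/
def gfun {M : Type*} [AddCommMonoid M] (k : Psets I → M) : Finset I → M :=
  fun T => if h : T ≠ ∅ ∧ T ≠ Finset.univ then k ⟨T, h⟩ else 0

lemma sum_filter_eq {M : Type*} [AddCommMonoid M] (k : Psets I → M) (P : Pars I) :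
    ∑ S ∈ Finset.univ.filter (fun S : Psets I => S.1 ∈ P.1), k S
      = ∑ T ∈ P.1, gfun k T := by
  refine Finset.sum_bij' (fun S _ => S.1)
    (fun T hT => (⟨T, block_ne_empty P hT, block_ne_univ_s16 P hT⟩ : Psets I)) ?_ ?_ ?_ ?_ ?_
  · intro S hS; simpa using (Finset.mem_filter.mp hS).2
  · intro T hT; simpa using hT
  · intro S hS; rfl
  · intro T hT; rfl
  · intro S hS
    simp [gfun, dif_pos S.2]

lemma mk_isPart (P : Finset (Finset I)) (h1 : ∀ T ∈ P, T ≠ ∅)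
    (h2 : ∀ T ∈ P, ∀ T' ∈ P, T ≠ T' → Disjoint T T')
    (h3 : ∀ a : I, ∃ T ∈ P, a ∈ T) : IsPart P := by
  refine ⟨h1, fun a => ?_⟩
  obtain ⟨T, hT, haT⟩ := h3 a
  refine ⟨T, ⟨hT, haT⟩, ?_⟩
  rintro T' ⟨hT', haT'⟩
  by_contra hne
  exact (Finset.disjoint_left.mp (h2 T' hT' T hT hne) haT') haT

variable (n : Pars I → ℤ) (k : Psets I → ℚ)
variable (hn : ∀ P : Pars I, (n P : ℚ) = ∑ T ∈ P.1, gfun k T)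

include hn

lemma two_block {S : Finset I} (hS : S ≠ ∅) (hS' : S ≠ Finset.univ) :
    ∃ m : ℤ, gfun k S + gfun k Sᶜ = (m : ℚ) := by
  have hSc : Sᶜ ≠ ∅ := by
    intro h
    apply hS'
    refine Finset.eq_univ_iff_forall.mpr fun a => ?_
    by_contra ha
    have : a ∈ Sᶜ := Finset.mem_compl.mpr ha
    simp [h] at this
  have hne : S ≠ Sᶜ := by
    intro h
    obtain ⟨a, ha⟩ := Finset.nonempty_of_ne_empty hS
    exact (Finset.mem_compl.mp (h ▸ ha)) ha
  have hpart : IsPart ({S, Sᶜ} : Finset (Finset I)) := by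
    refine mk_isPart _ ?_ ?_ ?_
    · intro T hT
      rcases Finset.mem_insert.mp hT with h | h
      · exact h ▸ hS
      · exact (Finset.mem_singleton.mp h) ▸ hSc
    · intro T hT T' hT' hTT'
      rcases Finset.mem_insert.mp hT with h | h <;>
        rcases Finset.mem_insert.mp hT' with h' | h' <;>
        simp_all [disjoint_compl_right, disjoint_compl_left]
    · intro a
      by_cases ha : a ∈ S
      · exact ⟨S, by simp, ha⟩
      · exact ⟨Sᶜ, by simp, Finset.mem_compl.mpr ha⟩
  have hcard : ({S, Sᶜ} : Finset (Finset I)).card = 2 := Finset.card_pair hne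
  set P : Pars I := ⟨{S, Sᶜ}, hpart, by omega⟩
  refine ⟨n P, ?_⟩
  rw [hn P]
  show _ = ∑ T ∈ ({S, Sᶜ} : Finset (Finset I)), gfun k T
  rw [Finset.sum_pair hne]

lemma three_block {A B C : Finset I} (hA : A ≠ ∅) (hB : B ≠ ∅) (hC : C ≠ ∅)
    (hAB : Disjoint A B) (hAC : Disjoint A C) (hBC : Disjoint B C)
    (hcover : A ∪ B ∪ C = Finset.univ) :
    ∃ m : ℤ, gfun k A + gfun k B + gfun k C = (m : ℚ) := by
  have dne : ∀ {X Y : Finset I}, X ≠ ∅ → Disjoint X Y → X ≠ Y := by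
    intro X Y hX hd h
    obtain ⟨a, ha⟩ := Finset.nonempty_of_ne_empty hX
    exact (Finset.disjoint_left.mp hd ha) (h ▸ ha)
  have hABne : A ≠ B := dne hA hAB
  have hACne : A ≠ C := dne hA hAC
  have hBCne : B ≠ C := dne hB hBC
  have hpart : IsPart ({A, B, C} : Finset (Finset I)) := by
    refine mk_isPart _ ?_ ?_ ?_
    · intro T hT
      simp only [Finset.mem_insert, Finset.mem_singleton] at hT
      rcases hT with h | h | h <;> subst h <;> assumption
    · intro T hT T' hT' hTT'
      simp only [Finset.mem_insert, Finset.mem_singleton] at hT hT'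
      rcases hT with h | h | h <;> rcases hT' with h' | h' | h' <;> subst h <;> subst h' <;>
        first
          | exact absurd rfl hTT'
          | assumption
          | exact hAB.symm
          | exact hAC.symm
          | exact hBC.symm
    · intro a
      have : a ∈ A ∪ B ∪ C := hcover ▸ Finset.mem_univ a
      simp only [Finset.mem_union] at this
      rcases this with (h | h) | h
      · exact ⟨A, by simp, h⟩
      · exact ⟨B, by simp, h⟩
      · exact ⟨C, by simp, h⟩
  have hcard : ({A, B, C} : Finset (Finset I)).card = 3 := by
    rw [Finset.card_insert_of_notMem (by simp [hABne, hACne]),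
      Finset.card_pair hBCne]
  set P : Pars I := ⟨{A, B, C}, hpart, by omega⟩
  refine ⟨n P, ?_⟩
  rw [hn P]
  show _ = ∑ T ∈ ({A, B, C} : Finset (Finset I)), gfun k T
  rw [Finset.sum_insert (by simp [hABne, hACne]), Finset.sum_pair hBCne]
  ring

lemma singleton_proper (hI : 2 ≤ Fintype.card I) (i : I) :
    ({i} : Finset I) ≠ ∅ ∧ ({i} : Finset I) ≠ Finset.univ := by
  constructor
  · simp
  · intro h
    have := Finset.card_univ (α := I)
    rw [← h] at this
    simp at this
    omega

lemma singleton_sum (hI : 2 ≤ Fintype.card I) :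
    ∃ P₀ : Pars I, (n P₀ : ℚ) = ∑ i : I, gfun k {i} := by
  set P : Finset (Finset I) := Finset.univ.image (fun i : I => ({i} : Finset I)) with hP
  have hinj : Function.Injective (fun i : I => ({i} : Finset I)) := fun a b h => by
    simpa using h
  have hpart : IsPart P := by
    refine mk_isPart _ ?_ ?_ ?_
    · intro T hT
      obtain ⟨i, -, rfl⟩ := Finset.mem_image.mp hT
      simp
    · intro T hT T' hT' hne
      obtain ⟨i, -, rfl⟩ := Finset.mem_image.mp hT
      obtain ⟨j, -, rfl⟩ := Finset.mem_image.mp hT'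
      simp only [Finset.disjoint_singleton]
      intro h; exact hne (by rw [h])
    · intro a
      exact ⟨{a}, Finset.mem_image.mpr ⟨a, Finset.mem_univ a, rfl⟩, Finset.mem_singleton_self a⟩
  have hcard : P.card = Fintype.card I := by
    rw [hP, Finset.card_image_of_injective _ hinj, Finset.card_univ]
  refine ⟨⟨P, hpart, by omega⟩, ?_⟩
  rw [hn]
  show ∑ T ∈ P, gfun k T = _
  rw [hP, Finset.sum_image (fun a _ b _ h => hinj h)]

lemma key_int (hI : 2 ≤ Fintype.card I) :
    ∀ N (S : Finset I), S.card = N → S ≠ ∅ → S ≠ Finset.univ →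
      ∃ m : ℤ, gfun k S - ∑ i ∈ S, gfun k {i} = (m : ℚ) := by
  intro N
  induction N using Nat.strong_induction_on with
  | _ N ih =>
    intro S hcard hS hS'
    obtain ⟨i, hi⟩ := Finset.nonempty_of_ne_empty hS
    by_cases hone : S.card = 1
    · obtain ⟨a, rfl⟩ := Finset.card_eq_one.mp hone
      exact ⟨0, by simp⟩
    · have hcard2 : 2 ≤ S.card := by
        have : 1 ≤ S.card := Finset.card_pos.mpr ⟨i, hi⟩
        omega
      set B := S \ {i} with hB
      have hBcard : B.card = S.card - 1 := by
        rw [hB, Finset.card_sdiff_of_subset (by simpa using hi)]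
        simp
      have hBne : B ≠ ∅ := by
        rw [← Finset.nonempty_iff_ne_empty, ← Finset.card_pos]
        omega
      have hBuniv : B ≠ Finset.univ := by
        intro h
        have : i ∈ B := h ▸ Finset.mem_univ i
        simp [hB] at this
      have hSc : Sᶜ ≠ ∅ := by
        intro h
        apply hS'
        refine Finset.eq_univ_iff_forall.mpr fun a => ?_
        by_contra ha
        have : a ∈ Sᶜ := Finset.mem_compl.mpr ha
        simp [h] at this
      obtain ⟨m3, hm3⟩ := three_block n k hn (A := {i}) (B := B) (C := Sᶜ)
        (by simp) hBne hSc
        (by simp [hB])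
        (by simp [Finset.disjoint_left, hi])
        (by simp [Finset.disjoint_left, hB]; tauto)
        (by
          rw [Finset.union_comm ({i} : Finset I) B]
          have : B ∪ {i} = S := by
            rw [hB]; exact Finset.sdiff_union_of_subset (by simpa using hi)
          rw [this, Finset.union_compl])
      obtain ⟨m2, hm2⟩ := two_block n k hn hS hS'
      obtain ⟨m1, hm1⟩ := ih B.card (by omega) B rfl hBne hBuniv
      refine ⟨m2 - m3 + m1, ?_⟩
      rw [Finset.sum_eq_sum_sdiff_singleton_add hi (fun j => gfun k {j}), ← hB]
      push_cast
      linarith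

omit hn

lemma sum_over_blocks {M : Type*} [AddCommMonoid M] (P : Pars I) (f : I → M) :
    ∑ T ∈ P.1, ∑ i ∈ T, f i = ∑ i : I, f i := by
  have hdisj : ((P.1 : Set (Finset I))).PairwiseDisjoint (id : Finset I → Finset I) := by
    intro T hT T' hT' hne
    simp only [Function.onFun, id]
    rw [Finset.disjoint_left]
    intro a haT haT'
    obtain ⟨S, -, hu⟩ := P.2.1.2 a
    exact hne ((hu T ⟨hT, haT⟩).trans (hu T' ⟨hT', haT'⟩).symm)
  have hb := Finset.sum_biUnion (f := f) hdisj
  simp only [id] at hb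
  rw [← hb]
  congr 1
  refine Finset.eq_univ_iff_forall.mpr fun a => ?_
  obtain ⟨T, ⟨hT, haT⟩, -⟩ := P.2.1.2 a
  exact Finset.mem_biUnion.mpr ⟨T, hT, haT⟩

lemma indicator_sum {M : Type*} [AddCommMonoid M] (P : Pars I) (i₀ : I) (c : M) :
    ∑ T ∈ P.1, (if i₀ ∈ T then c else 0) = c := by
  obtain ⟨T₀, ⟨hT₀, hi₀⟩, hu⟩ := P.2.1.2 i₀
  rw [Finset.sum_eq_single_of_mem T₀ hT₀]
  · rw [if_pos hi₀]
  · intro T hT hne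
    rw [if_neg]
    intro hi
    exact hne (hu T ⟨hT, hi⟩)

end Aux


/-- If `n : Par(I) → ℤ` is of the form `n(P) = ∑_{S ∈ P} k(S)` for a
rational-valued `k`, then it is of this form for an integer-valued `k̃`; that is, the
image of `q_* p^* : ℤ[𝒫(I)] → ℤ[Par(I)]` is saturated in `ℤ[Par(I)]`. -/
theorem image_qp_saturated (I : Type) [Fintype I] [DecidableEq I]
    (hI : 2 ≤ Fintype.card I) (n : Pars I → ℤ)
    (h : ∃ k : Psets I → ℚ, ∀ P : Pars I,
      (n P : ℚ) = ∑ S ∈ Finset.univ.filter (fun S : Psets I => S.1 ∈ P.1), k S) :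
    ∃ k' : Psets I → ℤ, n = qp k' := by
  obtain ⟨k, hk⟩ := h
  have hn : ∀ P : Pars I, (n P : ℚ) = ∑ T ∈ P.1, gfun k T := by
    intro P
    rw [hk P, sum_filter_eq]
  have hne : Nonempty I := Fintype.card_pos_iff.mp (by omega)
  set i₀ : I := Classical.arbitrary I
  obtain ⟨P₀, hP₀⟩ := singleton_sum n k hn hI
  have hkey := key_int n k hn hI
  set c : Psets I → ℤ := fun S => Classical.choose (hkey S.1.card S.1 rfl S.2.1 S.2.2) with hc
  have hcspec : ∀ S : Psets I,
      gfun k S.1 - ∑ i ∈ S.1, gfun k {i} = ((c S : ℤ) : ℚ) :=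
    fun S => Classical.choose_spec (hkey S.1.card S.1 rfl S.2.1 S.2.2)
  set k' : Psets I → ℤ := fun S => c S + (if i₀ ∈ S.1 then n P₀ else 0) with hk'
  refine ⟨k', ?_⟩
  funext P
  have hcast : ((qp k' P : ℤ) : ℚ) = (n P : ℚ) := by
    rw [qp, sum_filter_eq]
    push_cast
    have heach : ∀ T ∈ P.1, ((gfun k' T : ℤ) : ℚ)
        = (gfun k T - ∑ i ∈ T, gfun k {i}) + (if i₀ ∈ T then (n P₀ : ℚ) else 0) := by
      intro T hT
      have hprop : T ≠ ∅ ∧ T ≠ Finset.univ := ⟨block_ne_empty P hT, block_ne_univ_s16 P hT⟩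
      have hcs : gfun k T - ∑ i ∈ T, gfun k {i} = ((c ⟨T, hprop⟩ : ℤ) : ℚ) :=
        hcspec ⟨T, hprop⟩
      rw [gfun, dif_pos hprop, hk', hcs]
      push_cast [apply_ite (fun z : ℤ => (z : ℚ))]
      norm_cast
    rw [Finset.sum_congr rfl heach]
    rw [Finset.sum_add_distrib, Finset.sum_sub_distrib, sum_over_blocks, indicator_sum,
      ← hn P, ← hP₀]
    ring
  exact_mod_cast hcast.symm
end
end

section
/- Let I be a finite set with |I| = n ≥ 2. The image of q_*p^* : ℤ[𝒫(I)] → ℤ[Par(I)] is a free abelian group of rank 2^n − n − 1. -/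
noncomputable section
open Classical

/-- The map `q_* p^*` as a homomorphism of abelian groups. -/
def qpHom (I : Type) [Fintype I] [DecidableEq I] : (Psets I → ℤ) →+ (Pars I → ℤ) where
  toFun := qp
  map_zero' := by
    funext P
    simp [qp]
  map_add' := by
    intro k l
    funext P
    simp [qp, Finset.sum_add_distrib]

/-! Extend `k : ℤ[𝒫(I)]` by zero to all subsets of `I`. If `q_*p^* k = 0`, evaluating on the
partitions `{S, Sᶜ}` and `{A, B, (A ∪ B)ᶜ}` shows that `k` is additive on disjoint unions
different from `I` and that its values on singletons sum to zero. Hence the kernel of `q_*p^*`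
is the image of `{c : I → ℤ | ∑ c = 0}` under `c ↦ (S ↦ ∑_{i ∈ S} c i)`, which is injective for
`n ≥ 2`; so the kernel has rank `n - 1`. The image is a subgroup of a free abelian group of finite
rank, hence free, and by rank–nullity its rank is `(2^n - 2) - (n - 1)`. -/

universe u

theorem LinearMap.finrank_range_add_finrank_ker' {R : Type*} {M : Type u} {N : Type*} [Ring R]
    [HasRankNullity.{u} R] [StrongRankCondition R] [AddCommGroup M] [AddCommGroup N]
    [Module R M] [Module R N] [Module.Finite R M] (f : M →ₗ[R] N) :
    Module.finrank R (LinearMap.range f) + Module.finrank R (LinearMap.ker f) =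
      Module.finrank R M := by
  rw [← f.quotKerEquivRange.finrank_eq]
  exact Submodule.finrank_quotient_add_finrank _

section Partitions

variable {I : Type}

theorem isPart_iff (P : Finset (Finset I)) :
    IsPart P ↔ (∀ S ∈ P, S.Nonempty) ∧ (P : Set (Finset I)).PairwiseDisjoint id ∧
      ∀ a, ∃ S ∈ P, a ∈ S := by
  simp only [IsPart, ← Finset.nonempty_iff_ne_empty]
  refine and_congr_right fun _ => ⟨fun h => ⟨?_, fun a => ?_⟩, fun ⟨hdisj, hcov⟩ a => ?_⟩
  · intro S hS T hT hST
    refine Finset.disjoint_left.2 fun a haS haT => hST ?_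
    exact (h a).unique ⟨hS, haS⟩ ⟨hT, haT⟩
  · obtain ⟨S, hS, -⟩ := h a
    exact ⟨S, hS⟩
  · obtain ⟨S, hS, haS⟩ := hcov a
    refine ⟨S, ⟨hS, haS⟩, fun T ⟨hT, haT⟩ => ?_⟩
    by_contra hTS
    exact Finset.disjoint_left.1 (hdisj hT hS hTS) haT haS

theorem IsPart.sum_sum [Fintype I] {M : Type*} [AddCommMonoid M] {P : Finset (Finset I)}
    (hP : IsPart P) (c : I → M) : ∑ S ∈ P, ∑ i ∈ S, c i = ∑ i, c i := by
  obtain ⟨-, hdisj, hcov⟩ := (isPart_iff P).1 hP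
  have hunion : P.biUnion id = Finset.univ :=
    Finset.eq_univ_of_forall fun a => Finset.mem_biUnion.2 (hcov a)
  rw [← hunion]
  exact (Finset.sum_biUnion hdisj).symm

end Partitions

section Kernel

variable {I : Type} [Fintype I] [DecidableEq I]

theorem Pars.ne_univ_of_mem (P : Pars I) {S : Finset I} (hS : S ∈ P.1) : S ≠ Finset.univ := by
  obtain ⟨hne, hdisj, -⟩ := (isPart_iff P.1).1 P.2.1
  obtain ⟨T, hT, hTS⟩ := Finset.exists_mem_ne P.2.2 S
  obtain ⟨a, ha⟩ := hne T hT
  rintro rfl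
  exact Finset.disjoint_left.1 (hdisj hT hS hTS) ha (Finset.mem_univ a)

theorem isPart_pair {S : Finset I} (hS : S.Nonempty) (hSc : Sᶜ.Nonempty) : IsPart {S, Sᶜ} := by
  refine (isPart_iff _).2 ⟨by simp [hS, hSc], ?_, fun a => ?_⟩
  · simp [Set.pairwiseDisjoint_insert, disjoint_compl_right]
  · by_cases ha : a ∈ S <;> simp [ha]

theorem isPart_triple {A B : Finset I} (hA : A.Nonempty) (hB : B.Nonempty) (hAB : Disjoint A B)
    (hC : (A ∪ B)ᶜ.Nonempty) : IsPart {A, B, (A ∪ B)ᶜ} := by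
  refine (isPart_iff _).2 ⟨?_, ?_, fun a => ?_⟩
  · simp only [Finset.mem_insert, Finset.mem_singleton]
    rintro S (rfl | rfl | rfl) <;> assumption
  · have hBC : Disjoint B (A ∪ B)ᶜ := disjoint_compl_right.mono_right (by simp)
    have hAC : Disjoint A (A ∪ B)ᶜ := disjoint_compl_right.mono_right (by simp)
    simp_all [Set.pairwiseDisjoint_insert]
  · by_cases ha : a ∈ A <;> by_cases hb : a ∈ B <;> simp [ha, hb]

def extendByZero (k : Psets I → ℤ) : Finset I → ℤ :=
  Function.extend Subtype.val k (0 : Finset I → ℤ)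

@[simp]
theorem extendByZero_val (k : Psets I → ℤ) (S : Psets I) : extendByZero k S.1 = k S :=
  Subtype.val_injective.extend_apply k _ S

@[simp]
theorem extendByZero_empty (k : Psets I → ℤ) : extendByZero k ∅ = 0 :=
  Function.extend_apply' k _ _ fun ⟨T, hT⟩ => T.2.1 hT

@[simp]
theorem extendByZero_univ (k : Psets I → ℤ) : extendByZero k Finset.univ = 0 :=
  Function.extend_apply' k _ _ fun ⟨T, hT⟩ => T.2.2 hT

theorem qp_comp_val (f : Finset I → ℤ) (P : Pars I) :
    qp (f ∘ Subtype.val) P = ∑ S ∈ P.1, f S := by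
  have hsub : Finset.univ.filter (fun S : Psets I => S.1 ∈ P.1) = P.1.subtype _ := by
    ext S
    simp
  have hproper : P.1.filter (fun S => S ≠ ∅ ∧ S ≠ Finset.univ) = P.1 :=
    Finset.filter_true_of_mem fun S hS => ⟨P.2.1.1 S hS, P.ne_univ_of_mem hS⟩
  rw [qp, hsub]
  exact (Finset.sum_subtype_eq_sum_filter f).trans (by rw [hproper])

theorem qp_eq_sum_extendByZero (k : Psets I → ℤ) (P : Pars I) :
    qp k P = ∑ S ∈ P.1, extendByZero k S := by
  rw [← qp_comp_val, extendByZero, Function.extend_comp Subtype.val_injective]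

theorem extendByZero_add_extendByZero_compl {k : Psets I → ℤ} (hk : qp k = 0) (S : Finset I) :
    extendByZero k S + extendByZero k Sᶜ = 0 := by
  rcases S.eq_empty_or_nonempty with rfl | hS
  · simp
  rcases Sᶜ.eq_empty_or_nonempty with hSc | hSc
  · simp [(Finset.compl_eq_empty_iff S).1 hSc]
  have hne : S ≠ Sᶜ := disjoint_compl_right.ne_iff.2 (Or.inl hS.ne_empty)
  have hpair := congrFun hk ⟨{S, Sᶜ}, isPart_pair hS hSc, (Finset.card_pair hne).ge⟩
  rwa [qp_eq_sum_extendByZero, Finset.sum_pair hne] at hpair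

theorem extendByZero_union {k : Psets I → ℤ} (hk : qp k = 0) {A B : Finset I}
    (hAB : Disjoint A B) (hunion : A ∪ B ≠ Finset.univ) :
    extendByZero k (A ∪ B) = extendByZero k A + extendByZero k B := by
  rcases A.eq_empty_or_nonempty with rfl | hA
  · simp
  rcases B.eq_empty_or_nonempty with rfl | hB
  · simp
  have hC : (A ∪ B)ᶜ.Nonempty := by
    rwa [Finset.nonempty_iff_ne_empty, Ne, Finset.compl_eq_empty_iff]
  have hne : A ≠ B := hAB.ne_iff.2 (Or.inl hA.ne_empty)
  have hAC : A ≠ (A ∪ B)ᶜ :=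
    (disjoint_compl_right.mono_right (by simp)).ne_iff.2 (Or.inl hA.ne_empty)
  have hBC : B ≠ (A ∪ B)ᶜ :=
    (disjoint_compl_right.mono_right (by simp)).ne_iff.2 (Or.inl hB.ne_empty)
  have hA_notMem : A ∉ ({B, (A ∪ B)ᶜ} : Finset (Finset I)) := by
    simp only [Finset.mem_insert, Finset.mem_singleton, not_or]
    exact ⟨hne, hAC⟩
  have hcard : 2 ≤ ({A, B, (A ∪ B)ᶜ} : Finset (Finset I)).card := by
    rw [Finset.card_insert_of_notMem hA_notMem, Finset.card_pair hBC]
    omega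
  have htriple := congrFun hk ⟨_, isPart_triple hA hB hAB hC, hcard⟩
  rw [qp_eq_sum_extendByZero, Finset.sum_insert hA_notMem, Finset.sum_pair hBC]
    at htriple
  have hpair := extendByZero_add_extendByZero_compl hk (A ∪ B)
  simp only [Pi.zero_apply] at htriple
  linarith

theorem extendByZero_eq_sum_singleton {k : Psets I → ℤ} (hk : qp k = 0) {S : Finset I}
    (hS : S ≠ Finset.univ) : extendByZero k S = ∑ i ∈ S, extendByZero k {i} := by
  induction S using Finset.induction_on with
  | empty => simp
  | insert a S haS ih =>
    have hS' : S ≠ Finset.univ := fun h => haS (h ▸ Finset.mem_univ a)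
    rw [Finset.insert_eq] at hS ⊢
    rw [extendByZero_union hk (Finset.disjoint_singleton_left.2 haS) hS, ih hS',
      Finset.sum_union (Finset.disjoint_singleton_left.2 haS), Finset.sum_singleton]

theorem sum_extendByZero_singleton {k : Psets I → ℤ} (hk : qp k = 0) :
    ∑ i, extendByZero k {i} = 0 := by
  cases isEmpty_or_nonempty I
  · simp
  obtain ⟨i⟩ := ‹Nonempty I›
  have hcompl : ({i}ᶜ : Finset I) ≠ Finset.univ := by simp
  rw [← Finset.sum_add_sum_compl {i}, Finset.sum_singleton,
    ← extendByZero_eq_sum_singleton hk hcompl, extendByZero_add_extendByZero_compl hk]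

def totalSum : (I → ℤ) →ₗ[ℤ] ℤ where
  toFun c := ∑ i, c i
  map_add' _ _ := Finset.sum_add_distrib
  map_smul' _ _ := by simp [Finset.mul_sum]

def setSum : (I → ℤ) →ₗ[ℤ] (Psets I → ℤ) where
  toFun c S := ∑ i ∈ S.1, c i
  map_add' _ _ := funext fun _ => Finset.sum_add_distrib
  map_smul' _ _ := funext fun _ => by simp [Finset.mul_sum]

theorem qp_setSum (c : I → ℤ) (P : Pars I) : qp (setSum c) P = ∑ i, c i :=
  (qp_comp_val (fun S => ∑ i ∈ S, c i) P).trans (P.2.1.sum_sum c)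

theorem ker_qpHom :
    LinearMap.ker (qpHom I).toIntLinearMap = (LinearMap.ker totalSum).map setSum := by
  ext k
  simp only [LinearMap.mem_ker, Submodule.mem_map]
  constructor
  · intro hk
    refine ⟨fun i => extendByZero k {i}, sum_extendByZero_singleton hk, funext fun S => ?_⟩
    exact (extendByZero_eq_sum_singleton hk S.2.2).symm.trans (extendByZero_val k S)
  · rintro ⟨c, hc, rfl⟩
    exact funext fun P => (qp_setSum c P).trans hc

theorem card_psets [Nonempty I] : Fintype.card (Psets I) = 2 ^ Fintype.card I - 2 := by
  have hfilter : Finset.univ.filter (fun S : Finset I => S ≠ ∅ ∧ S ≠ Finset.univ) =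
      Finset.univ \ {∅, Finset.univ} := by
    ext S
    simp [not_or]
  rw [Fintype.card_subtype, hfilter, Finset.card_sdiff_of_subset (Finset.subset_univ _),
    Finset.card_univ, Fintype.card_finset, Finset.card_pair Finset.univ_nonempty.ne_empty.symm]

theorem setSum_injective [Nontrivial I] : Function.Injective (setSum (I := I)) := by
  intro c d h
  funext i
  simpa [setSum] using congrFun h ⟨{i}, Finset.singleton_ne_empty i, Finset.singleton_ne_univ i⟩

theorem totalSum_surjective [Nonempty I] : Function.Surjective (totalSum (I := I)) := by
  intro z
  obtain ⟨i⟩ := ‹Nonempty I›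
  exact ⟨Pi.single i z, by simp [totalSum]⟩

theorem finrank_ker_totalSum [Nonempty I] :
    Module.finrank ℤ (LinearMap.ker (totalSum (I := I))) = Fintype.card I - 1 := by
  have h := (totalSum (I := I)).finrank_range_add_finrank_ker'
  rw [LinearMap.range_eq_top.2 totalSum_surjective, finrank_top, Module.finrank_self,
    Module.finrank_fintype_fun_eq_card] at h
  omega

theorem finrank_ker_qpHom [Nontrivial I] :
    Module.finrank ℤ (LinearMap.ker (qpHom I).toIntLinearMap) = Fintype.card I - 1 := by
  rw [ker_qpHom, ← (Submodule.equivMapOfInjective _ setSum_injective _).finrank_eq,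
    finrank_ker_totalSum]

theorem finrank_range_qpHom [Nontrivial I] :
    Module.finrank ℤ (LinearMap.range (qpHom I).toIntLinearMap) =
      2 ^ Fintype.card I - Fintype.card I - 1 := by
  have h := (qpHom I).toIntLinearMap.finrank_range_add_finrank_ker'
  rw [finrank_ker_qpHom, Module.finrank_fintype_fun_eq_card, card_psets] at h
  have := Nat.lt_two_pow_self (n := Fintype.card I)
  have : 1 ≤ Fintype.card I := Fintype.card_pos
  omega

end Kernel

/-- The image of `q_* p^* : ℤ[𝒫(I)] → ℤ[Par(I)]` is a free abelian
group of rank `2^n - n - 1`, where `n = |I|`. -/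
theorem image_qp_free_of_rank (I : Type) [Fintype I] [DecidableEq I]
    (hI : 2 ≤ Fintype.card I) :
    Nonempty ((qpHom I).range ≃+
      (Fin (2 ^ Fintype.card I - Fintype.card I - 1) → ℤ)) := by
  have : Nontrivial I := Fintype.one_lt_card_iff_nontrivial.1 hI
  let basis := Module.finBasisOfFinrankEq ℤ (LinearMap.range (qpHom I).toIntLinearMap)
    finrank_range_qpHom
  -- `LinearMap.range f.toIntLinearMap` is `f.range` by definition
  -- (`AddMonoidHom.coe_toIntLinearMap_range`).
  exact ⟨basis.equivFun.toAddEquiv⟩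
end
end
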